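/- Let p ≥ 2 and α > ρ > 0, and let (χ^{[ℓ]}_{α,ρ,h}) be the quadratic partition of unity of ℝ² (from the construction with cells of side ~ h^ρ and overlap ~ h^α, satisfying Σ_ℓ (χ^{[ℓ]})² = 1 and Σ_ℓ |∇χ^{[ℓ]}|² ≤ D h^{−2α}). Then there exist C > 0 and h₀ > 0 such that for every ψ ∈ L^p(Ω) and every h ∈ (0, h₀) there exists τ ∈ ℝ² such that, denoting χ̃^{[ℓ]}_{α,ρ,h}(x) = χ^{[ℓ]}_{α,ρ,h}(x − τ), one has Σ_ℓ ∫_Ω |χ̃^{[ℓ]}_{α,ρ,h} ψ|^p dx ≤ ∫_Ω |ψ|^p dx ≤ (1 + C h^{α−ρ}) Σ_ℓ ∫_Ω |χ̃^{[ℓ]}_{α,ρ,h} ψ|^p dx; moreover, the translated partition still satisfies Σ_ℓ |∇χ̃^{[ℓ]}_{α,ρ,h}|² ≤ D h^{−2α}. -/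

import Mathlib

open MeasureTheory Complex Filter
open scoped Real ENNReal Topology

noncomputable section

/-- The Euclidean plane. -/
abbrev E2 := EuclideanSpace ℝ (Fin 2)

/-- Canonical basis vectors of the plane. -/
def ee (j : Fin 2) : E2 := EuclideanSpace.single j (1:ℝ)

/-- `j`-th component of the magnetic gradient `(-ih∇ + A)ψ`. -/
def magD (h : ℝ) (A : E2 → E2) (ψ : E2 → ℂ) (j : Fin 2) (x : E2) : ℂ :=
  -Complex.I * h * fderiv ℝ ψ x (ee j) + (A x j : ℂ) * ψ x

/-- Squared pointwise norm `|(-ih∇+A)ψ(x)|²` of the magnetic gradient. -/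
def magD2 (h : ℝ) (A : E2 → E2) (ψ : E2 → ℂ) (x : E2) : ℝ :=
  ∑ j, ‖magD h A ψ j x‖^2

/-- The magnetic quadratic form `Q_{h,A}(ψ) = ∫_Ω |(-ih∇+A)ψ|² dx`. -/
def Qform (h : ℝ) (A : E2 → E2) (Ω : Set E2) (ψ : E2 → ℂ) : ℝ :=
  ∫ x in Ω, magD2 h A ψ x

/-- Membership in `H¹₀(Ω)`: vanishing outside `Ω`, square integrable, with square
integrable gradient. -/
def MemH10 (Ω : Set E2) (ψ : E2 → ℂ) : Prop :=
  (∀ x ∉ Ω, ψ x = 0) ∧ MemLp ψ 2 volume ∧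
  (∀ᵐ x, DifferentiableAt ℝ ψ x) ∧
  MemLp (fun x => fderiv ℝ ψ x) 2 volume

/-- The optimal magnetic Sobolev constant
`λ(Ω,A,p,h) = inf {Q_{h,A}(ψ) : ψ ∈ H¹₀(Ω), ‖ψ‖_{L^p(Ω)} = 1}`. -/
def lambdaMin (Ω : Set E2) (A : E2 → E2) (p h : ℝ) : ℝ :=
  sInf {r | ∃ ψ : E2 → ℂ, MemH10 Ω ψ ∧ (∫ x in Ω, ‖ψ x‖ ^ p) = 1 ∧ r = Qform h A Ω ψ}

/-- The model vector potential `A^{[k]}(x,y) = (0, x^{k+1}/(k+1))`. -/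
def Amodel (k : ℕ) : E2 → E2 := fun x => WithLp.toLp 2 ![0, (x 0)^(k+1) / (k+1)]

/-- Membership in the form domain of `Q_A` on the whole plane: `ψ ∈ L²(ℝ²)` and
`(-i∇+A)ψ ∈ L²(ℝ²)`. -/
def MemDomQ (A : E2 → E2) (ψ : E2 → ℂ) : Prop :=
  MemLp ψ 2 volume ∧ (∀ᵐ x, DifferentiableAt ℝ ψ x) ∧
  ∀ j, MemLp (magD 1 A ψ j) 2 volume

/-- The model optimal constant
`λ^{[k]}(p) = inf {Q_{A^{[k]}}(ψ) : ψ ∈ Dom(Q_{A^{[k]}}), ‖ψ‖_{L^p(ℝ²)} = 1}`. -/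
def lambdaModel (k : ℕ) (p : ℝ) : ℝ :=
  sInf {r | ∃ ψ : E2 → ℂ, MemDomQ (Amodel k) ψ ∧ (∫ x, ‖ψ x‖ ^ p) = 1 ∧
    r = Qform 1 (Amodel k) Set.univ ψ}

/-- The magnetic field `B = curl A = ∂₁A₂ - ∂₂A₁`. -/
def curl (A : E2 → E2) (x : E2) : ℝ :=
  fderiv ℝ (fun y => A y 1) x (ee 0) - fderiv ℝ (fun y => A y 0) x (ee 1)

/-- The magnetic Laplacian `(-ih∇+A)²ψ`, computed with classical derivatives. -/
def magLap (h : ℝ) (A : E2 → E2) (ψ : E2 → ℂ) (x : E2) : ℂ :=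
  ∑ j, (-Complex.I * h * fderiv ℝ (magD h A ψ j) x (ee j) + (A x j : ℂ) * magD h A ψ j x)

/-- `ψ` is a minimizer for `λ^{[k]}(p)`: nonzero, in the form domain, and attaining the
infimum `Q_{A^{[k]}}(ψ) = λ^{[k]}(p) ‖ψ‖²_{L^p}`. -/
def IsMinimizerModel (k : ℕ) (p : ℝ) (ψ : E2 → ℂ) : Prop :=
  MemDomQ (Amodel k) ψ ∧ ¬ (ψ =ᵐ[volume] (0 : E2 → ℂ)) ∧
  Qform 1 (Amodel k) Set.univ ψ = lambdaModel k p * (∫ x, ‖ψ x‖ ^ p) ^ ((2:ℝ)/p)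


/-- Auxiliary: volume of a "product" set in `E2` is the product of the 1-D volumes. -/
lemma st18_vol_prod (A B : Set ℝ) (hA : MeasurableSet A) (hB : MeasurableSet B) :
    volume {τ : E2 | τ 0 ∈ A ∧ τ 1 ∈ B} = volume A * volume B := by
  have hmp := EuclideanSpace.volume_preserving_symm_measurableEquiv_toLp (Fin 2)
  have hC : ∀ i : Fin 2, MeasurableSet (![A, B] i) := by
    intro i; fin_cases i <;> simpa
  have hs : MeasurableSet (Set.univ.pi ![A, B]) := MeasurableSet.univ_pi hC
  have hset : {τ : E2 | τ 0 ∈ A ∧ τ 1 ∈ B} =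
      (MeasurableEquiv.toLp 2 (Fin 2 → ℝ)).symm ⁻¹' (Set.univ.pi ![A, B]) := by
    ext τ
    simp [Set.mem_univ_pi, Fin.forall_fin_two]
  rw [hset, hmp.measure_preimage hs.nullMeasurableSet, volume_pi_pi]
  simp [Fin.prod_univ_two]

/-- Auxiliary: in every window of length `L`, the `L`-periodic family of intervals of
half-width `s` occupies measure at least `2s`. -/
lemma st18_oneD_good (L s c : ℝ) (hs : 0 < s) (hL : 2*s < L) :
    ENNReal.ofReal (2*s) ≤ volume (Set.Ico (0:ℝ) L ∩ {t : ℝ | ∃ n : ℤ, |c - t - L*n| ≤ s}) := by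
  have hLpos : 0 < L := by linarith
  set n : ℤ := ⌊(c+s)/L⌋ with hn
  have h1' : L*n ≤ c+s := by
    have h1 : (n:ℝ) ≤ (c+s)/L := Int.floor_le _
    calc L*(n:ℝ) ≤ L*((c+s)/L) := by nlinarith
    _ = c+s := by field_simp
  have h2' : c+s < L*n + L := by
    have h2 : (c+s)/L < n+1 := Int.lt_floor_add_one _
    have : c + s = L*((c+s)/L) := by field_simp
    nlinarith
  set d : ℝ := c - L*n with hd
  have hd1 : -s ≤ d := by simp only [hd]; linarith
  have hd2 : d < L - s := by simp only [hd]; linarith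
  rcases le_or_gt s d with hcase | hcase
  · refine le_trans ?_ (measure_mono (?_ : Set.Icc (d-s) (d+s) ⊆ _))
    · rw [Real.volume_Icc]; apply le_of_eq; congr 1; ring
    · intro t ht
      obtain ⟨ht1, ht2⟩ := ht
      have hdt : c - t - L*(n:ℝ) = d - t := by rw [hd]; ring
      refine ⟨⟨by linarith, by linarith⟩, ⟨n, ?_⟩⟩
      rw [hdt, abs_le]; constructor <;> linarith
  · have hAB : volume (Set.Icc (0:ℝ) (d+s) ∪ Set.Ico (d+L-s) L)
        = ENNReal.ofReal (d+s) + ENNReal.ofReal (s-d) := by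
      rw [measure_union ?_ measurableSet_Ico, Real.volume_Icc, Real.volume_Ico]
      · congr 1 <;> [skip; congr 1] <;> ring
      · apply Set.disjoint_left.2
        rintro t ⟨_, ht2⟩ ⟨ht3, _⟩
        linarith
    refine le_trans ?_ (measure_mono
      (?_ : Set.Icc (0:ℝ) (d+s) ∪ Set.Ico (d+L-s) L ⊆ _))
    · rw [hAB, ← ENNReal.ofReal_add (by linarith) (by linarith)]
      apply ENNReal.ofReal_le_ofReal; linarith
    · rintro t (⟨ht1, ht2⟩ | ⟨ht1, ht2⟩)
      · have hdt : c - t - L*(n:ℝ) = d - t := by rw [hd]; ring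
        refine ⟨⟨by linarith, by linarith⟩, ⟨n, ?_⟩⟩
        rw [hdt, abs_le]; constructor <;> linarith
      · have hdt : c - t - L*((n-1 : ℤ):ℝ) = d + L - t := by push_cast; rw [hd]; ring
        refine ⟨⟨by linarith, ht2⟩, ⟨n-1, ?_⟩⟩
        rw [hdt, abs_le]; constructor <;> linarith

lemma st18_oneD_measG (L s c : ℝ) :
    MeasurableSet {t : ℝ | ∃ n : ℤ, |c - t - L*n| ≤ s} := by
  rw [Set.setOf_exists]
  exact MeasurableSet.iUnion fun m =>
    (isClosed_le (by fun_prop) continuous_const).measurableSet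

/-- Auxiliary: in every window of length `L`, the complement of the periodic family of
intervals has measure at most `L - 2s`. -/
lemma st18_oneD_bad (L s c : ℝ) (hs : 0 < s) (hL : 2*s < L) :
    volume (Set.Ico (0:ℝ) L ∩ {t : ℝ | ¬ ∃ n : ℤ, |c - t - L*n| ≤ s})
      ≤ ENNReal.ofReal (L - 2*s) := by
  have hGm := st18_oneD_measG L s c
  have key : Set.Ico (0:ℝ) L ∩ {t : ℝ | ¬ ∃ n : ℤ, |c - t - L*n| ≤ s}
      = Set.Ico (0:ℝ) L \ (Set.Ico (0:ℝ) L ∩ {t : ℝ | ∃ n : ℤ, |c - t - L*n| ≤ s}) := by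
    ext t; simp only [Set.mem_inter_iff, Set.mem_diff, Set.mem_setOf_eq]; tauto
  have hfin : volume (Set.Ico (0:ℝ) L ∩ {t : ℝ | ∃ n : ℤ, |c - t - L*n| ≤ s}) ≠ ⊤ := by
    refine ((measure_mono Set.inter_subset_left).trans_lt ?_).ne
    rw [Real.volume_Ico]; exact ENNReal.ofReal_lt_top
  rw [key, measure_diff Set.inter_subset_left (measurableSet_Ico.inter hGm).nullMeasurableSet hfin,
    Real.volume_Ico, sub_zero, ENNReal.ofReal_sub _ (by linarith : (0:ℝ) ≤ 2*s)]
  exact tsub_le_tsub le_rfl (st18_oneD_good L s c hs hL)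

set_option maxHeartbeats 1000000 in
/-- recovery of the `L^p`-norm from the local contributions of a
(suitably translated) quadratic partition of unity with small interaction supports. -/
theorem statement18
    (Ω : Set E2) (hΩo : IsOpen Ω) (hΩb : Bornology.IsBounded Ω)
    (p : ℝ) (hp : 2 ≤ p)
    (α ρ : ℝ) (hρ : 0 < ρ) (hρα : ρ < α) (D : ℝ) (hD : 0 < D)
    (χ : ℝ → ℤ × ℤ → E2 → ℝ)
    (hχsmooth : ∀ h : ℝ, 0 < h → ∀ ℓ : ℤ × ℤ, ContDiff ℝ (⊤ : ℕ∞) (χ h ℓ))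
    (hχ01 : ∀ h : ℝ, 0 < h → ∀ ℓ : ℤ × ℤ, ∀ x, 0 ≤ χ h ℓ x ∧ χ h ℓ x ≤ 1)
    (hχone : ∀ h : ℝ, 0 < h → ∀ ℓ : ℤ × ℤ, ∀ x : E2,
      max |x 0 - (2 * h ^ ρ + h ^ α) * (ℓ.1 : ℝ)|
          |x 1 - (2 * h ^ ρ + h ^ α) * (ℓ.2 : ℝ)| ≤ h ^ ρ → χ h ℓ x = 1)
    (hχzero : ∀ h : ℝ, 0 < h → ∀ ℓ : ℤ × ℤ, ∀ x : E2,
      h ^ ρ + h ^ α ≤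
        max |x 0 - (2 * h ^ ρ + h ^ α) * (ℓ.1 : ℝ)|
            |x 1 - (2 * h ^ ρ + h ^ α) * (ℓ.2 : ℝ)| → χ h ℓ x = 0)
    (hχsq : ∀ h : ℝ, 0 < h → ∀ x : E2, ∑' ℓ : ℤ × ℤ, (χ h ℓ x)^2 = 1)
    (hχgrad : ∀ h : ℝ, 0 < h → ∀ x : E2,
      ∑' ℓ : ℤ × ℤ, (∑ j, (fderiv ℝ (χ h ℓ) x (ee j))^2) ≤ D * h ^ (-(2*α))) :
    ∃ C > (0:ℝ), ∃ h₀ > (0:ℝ), ∀ ψ : E2 → ℂ,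
      MemLp ψ (ENNReal.ofReal p) (volume.restrict Ω) →
      ∀ h : ℝ, 0 < h → h < h₀ → ∃ τ : E2,
        (∑' ℓ : ℤ × ℤ, ∫ x in Ω, (χ h ℓ (x - τ) * ‖ψ x‖) ^ p) ≤
            (∫ x in Ω, ‖ψ x‖ ^ p) ∧
        (∫ x in Ω, ‖ψ x‖ ^ p) ≤
          (1 + C * h ^ (α - ρ)) *
            ∑' ℓ : ℤ × ℤ, ∫ x in Ω, (χ h ℓ (x - τ) * ‖ψ x‖) ^ p ∧
        (∀ x : E2,
          ∑' ℓ : ℤ × ℤ, (∑ j, (fderiv ℝ (fun y => χ h ℓ (y - τ)) x (ee j))^2) ≤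
            D * h ^ (-(2*α))) := by
  have hαρ : 0 < α - ρ := by linarith
  have hp0 : (0:ℝ) < p := by linarith
  refine ⟨2, by norm_num, min 1 ((2:ℝ) ^ (-(α-ρ)⁻¹)), lt_min one_pos (Real.rpow_pos_of_pos two_pos _), ?_⟩
  intro ψ hψ h hh hh0
  -- the small parameter ε = h^(α-ρ) is at most 1/2
  set ε : ℝ := h ^ (α - ρ) with hεdef
  have hεpos : 0 < ε := Real.rpow_pos_of_pos hh _
  have hε2 : ε ≤ 1/2 := by
    have h1 : h ≤ (2:ℝ) ^ (-(α-ρ)⁻¹) := le_of_lt (lt_of_lt_of_le hh0 (min_le_right _ _))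
    have h2 : ε ≤ ((2:ℝ) ^ (-(α-ρ)⁻¹)) ^ (α-ρ) := Real.rpow_le_rpow hh.le h1 hαρ.le
    have h3 : ((2:ℝ) ^ (-(α-ρ)⁻¹)) ^ (α-ρ) = (2:ℝ) ^ ((-(α-ρ)⁻¹) * (α-ρ)) :=
      (Real.rpow_mul (by norm_num) _ _).symm
    have h4 : (-(α-ρ)⁻¹) * (α-ρ) = -1 := by
      rw [neg_mul, inv_mul_cancel₀ (ne_of_gt hαρ)]
    rw [h3, h4] at h2
    rw [Real.rpow_neg_one] at h2
    norm_num at h2 ⊢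
    linarith
  -- basic geometric quantities
  set s : ℝ := h ^ ρ with hsdef
  set L : ℝ := 2 * h ^ ρ + h ^ α with hLdef
  have hspos : 0 < s := Real.rpow_pos_of_pos hh ρ
  have hapos : 0 < h ^ α := Real.rpow_pos_of_pos hh α
  have hLs : L = 2*s + h^α := by rw [hLdef, hsdef]
  have h2sL : 2*s < L := by rw [hLs]; linarith
  have hLpos : 0 < L := by linarith
  have hεs : ε * s = h ^ α := by
    rw [hεdef, hsdef, ← Real.rpow_add hh, sub_add_cancel]
  -- measurable representative of ψ
  obtain ⟨φ, hφsm, hφae⟩ := hψ.1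
  have hφme : Measurable φ := hφsm.measurable
  have hφmem : MemLp φ (ENNReal.ofReal p) (volume.restrict Ω) := hψ.ae_eq hφae
  have hgmeas : Measurable fun x : E2 => ‖φ x‖ ^ p := by fun_prop
  have hg_int : IntegrableOn (fun x : E2 => ‖φ x‖ ^ p) Ω volume := by
    have := hφmem.integrable_norm_rpow
      (by simp [ENNReal.ofReal_eq_zero]; linarith) (by simp)
    exact (by simpa [ENNReal.toReal_ofReal hp0.le] using this :
      Integrable (fun x : E2 => ‖φ x‖ ^ p) (volume.restrict Ω))
  set I : ℝ := ∫ x in Ω, ‖φ x‖ ^ p with hIdef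
  have hInn : 0 ≤ I := integral_nonneg fun x => Real.rpow_nonneg (norm_nonneg _) p
  have hIcongr : (∫ x in Ω, ‖ψ x‖ ^ p) = I := by
    apply integral_congr_ae
    filter_upwards [hφae] with x hx
    rw [hx]
  -- the "good" set where some χ equals 1
  set Gd : Set E2 :=
    {y : E2 | ∃ ℓ : ℤ × ℤ, max |y 0 - L * (ℓ.1:ℝ)| |y 1 - L * (ℓ.2:ℝ)| ≤ s} with hGddef
  have hGdiff : ∀ y : E2, y ∈ Gd ↔
      (∃ n : ℤ, |y 0 - L*(n:ℝ)| ≤ s) ∧ (∃ n : ℤ, |y 1 - L*(n:ℝ)| ≤ s) := by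
    intro y
    constructor
    · rintro ⟨ℓ, hm⟩
      rw [max_le_iff] at hm
      exact ⟨⟨ℓ.1, hm.1⟩, ⟨ℓ.2, hm.2⟩⟩
    · rintro ⟨⟨a, ha⟩, ⟨b, hb⟩⟩
      exact ⟨(a,b), max_le ha hb⟩
  have hcoord : ∀ i : Fin 2, Continuous fun y : E2 => y i :=
    fun i => (EuclideanSpace.proj (i : Fin 2) : E2 →L[ℝ] ℝ).continuous
  have hGdmeas : MeasurableSet Gd := by
    rw [hGddef, Set.setOf_exists]
    refine MeasurableSet.iUnion fun ℓ => ?_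
    refine (isClosed_le (Continuous.max ?_ ?_) continuous_const).measurableSet
    · exact ((hcoord 0).sub continuous_const).abs
    · exact ((hcoord 1).sub continuous_const).abs
  -- pointwise facts about the partition of unity
  have hsum2 : ∀ y : E2, Summable fun ℓ : ℤ × ℤ => (χ h ℓ y)^2 := by
    intro y
    by_contra hcon
    have := hχsq h hh y
    rw [tsum_eq_zero_of_not_summable hcon] at this
    norm_num at this
  have hpnn : ∀ (ℓ : ℤ × ℤ) (y : E2), 0 ≤ (χ h ℓ y) ^ p :=
    fun ℓ y => Real.rpow_nonneg (hχ01 h hh ℓ y).1 p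
  have hpow : ∀ (ℓ : ℤ × ℤ) (y : E2), (χ h ℓ y) ^ p ≤ (χ h ℓ y)^2 := by
    intro ℓ y
    obtain ⟨h0, h1⟩ := hχ01 h hh ℓ y
    rcases eq_or_lt_of_le h0 with heq | hlt
    · rw [← heq, Real.zero_rpow (by linarith : p ≠ 0)]
      norm_num
    · calc (χ h ℓ y) ^ p ≤ (χ h ℓ y) ^ (2:ℝ) :=
            Real.rpow_le_rpow_of_exponent_ge hlt h1 hp
      _ = (χ h ℓ y)^2 := by
            rw [show (2:ℝ) = ((2:ℕ):ℝ) by norm_num, Real.rpow_natCast]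
  have hsump : ∀ y : E2, Summable fun ℓ : ℤ × ℤ => (χ h ℓ y) ^ p :=
    fun y => Summable.of_nonneg_of_le (fun ℓ => hpnn ℓ y) (fun ℓ => hpow ℓ y) (hsum2 y)
  have hfin1 : ∀ (y : E2) (Fs : Finset (ℤ × ℤ)), ∑ ℓ ∈ Fs, (χ h ℓ y) ^ p ≤ 1 := by
    intro y Fs
    calc ∑ ℓ ∈ Fs, (χ h ℓ y) ^ p ≤ ∑ ℓ ∈ Fs, (χ h ℓ y)^2 :=
          Finset.sum_le_sum fun ℓ _ => hpow ℓ y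
    _ ≤ ∑' ℓ : ℤ × ℤ, (χ h ℓ y)^2 := Summable.sum_le_tsum Fs (fun ℓ _ => sq_nonneg _) (hsum2 y)
    _ = 1 := hχsq h hh y
  have hgood1 : ∀ y ∈ Gd, 1 ≤ ∑' ℓ : ℤ × ℤ, (χ h ℓ y) ^ p := by
    rintro y ⟨ℓ₀, hm⟩
    have h1 := hχone h hh ℓ₀ y hm
    have h2 := Summable.le_tsum (hsump y) ℓ₀ (fun j _ => hpnn j y)
    rwa [h1, Real.one_rpow] at h2
  -- the localized functions
  set F : E2 → ℤ × ℤ → E2 → ℝ := fun τ ℓ x => (χ h ℓ (x - τ) * ‖φ x‖) ^ p with hFdef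
  have hFnn : ∀ τ ℓ x, 0 ≤ F τ ℓ x := fun τ ℓ x =>
    Real.rpow_nonneg (mul_nonneg (hχ01 h hh ℓ _).1 (norm_nonneg _)) p
  have hFeq : ∀ τ ℓ x, F τ ℓ x = (χ h ℓ (x - τ)) ^ p * ‖φ x‖ ^ p := fun τ ℓ x =>
    Real.mul_rpow (hχ01 h hh ℓ _).1 (norm_nonneg _)
  have hχcont : ∀ ℓ : ℤ × ℤ, Continuous (χ h ℓ) := fun ℓ => (hχsmooth h hh ℓ).continuous
  have hFmeas : ∀ τ ℓ, Measurable (F τ ℓ) := by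
    intro τ ℓ
    have h1 : Measurable fun x : E2 => χ h ℓ (x - τ) :=
      ((hχcont ℓ).comp (continuous_id.sub continuous_const)).measurable
    fun_prop
  have hFle : ∀ τ ℓ x, F τ ℓ x ≤ ‖φ x‖ ^ p := by
    intro τ ℓ x
    refine Real.rpow_le_rpow (mul_nonneg (hχ01 h hh ℓ _).1 (norm_nonneg _)) ?_ hp0.le
    exact mul_le_of_le_one_left (norm_nonneg _) (hχ01 h hh ℓ _).2
  have hFint : ∀ τ ℓ, IntegrableOn (F τ ℓ) Ω volume := by
    intro τ ℓ
    refine Integrable.mono hg_int (hFmeas τ ℓ).aestronglyMeasurable (ae_of_all _ fun x => ?_)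
    rw [Real.norm_of_nonneg (hFnn τ ℓ x),
      Real.norm_of_nonneg (Real.rpow_nonneg (norm_nonneg _) p)]
    exact hFle τ ℓ x
  -- lower bound, valid for every τ
  have hfinsum : ∀ (τ : E2) (Fs : Finset (ℤ × ℤ)), ∑ ℓ ∈ Fs, ∫ x in Ω, F τ ℓ x ≤ I := by
    intro τ Fs
    rw [← integral_finset_sum Fs (fun ℓ _ => hFint τ ℓ)]
    refine integral_mono (integrable_finset_sum Fs (fun ℓ _ => hFint τ ℓ)) hg_int fun x => ?_
    calc ∑ ℓ ∈ Fs, F τ ℓ x = (∑ ℓ ∈ Fs, (χ h ℓ (x - τ)) ^ p) * ‖φ x‖ ^ p := by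
          rw [Finset.sum_mul]
          exact Finset.sum_congr rfl fun ℓ _ => hFeq τ ℓ x
    _ ≤ 1 * ‖φ x‖ ^ p :=
          mul_le_mul_of_nonneg_right (hfin1 _ Fs) (Real.rpow_nonneg (norm_nonneg _) p)
    _ = ‖φ x‖ ^ p := one_mul _
  have hSsum : ∀ τ : E2, Summable fun ℓ : ℤ × ℤ => ∫ x in Ω, F τ ℓ x := fun τ =>
    summable_of_sum_le (fun ℓ => integral_nonneg fun x => hFnn τ ℓ x) (hfinsum τ)
  have hSleI : ∀ τ : E2, (∑' ℓ : ℤ × ℤ, ∫ x in Ω, F τ ℓ x) ≤ I := fun τ =>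
    Summable.tsum_le_of_sum_le (hSsum τ) (hfinsum τ)
  -- gradient bound, valid for every τ
  have hgrad : ∀ (τ : E2) (x : E2),
      (∑' ℓ : ℤ × ℤ, ∑ j, (fderiv ℝ (fun y => χ h ℓ (y - τ)) x (ee j))^2) ≤ D * h ^ (-(2*α)) := by
    intro τ x
    have hkey : ∀ ℓ : ℤ × ℤ, fderiv ℝ (fun y => χ h ℓ (y - τ)) x = fderiv ℝ (χ h ℓ) (x - τ) := by
      intro ℓ
      have hd : HasFDerivAt (χ h ℓ) (fderiv ℝ (χ h ℓ) (x - τ)) (x - τ) :=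
        (((hχsmooth h hh ℓ).differentiable (by simp)) (x - τ)).hasFDerivAt
      have h2 : HasFDerivAt (fun y : E2 => y - τ) (ContinuousLinearMap.id ℝ E2) x :=
        (hasFDerivAt_id x).sub_const τ
      have h3 := hd.comp x h2
      rw [ContinuousLinearMap.comp_id] at h3
      exact h3.fderiv
    calc (∑' ℓ : ℤ × ℤ, ∑ j, (fderiv ℝ (fun y => χ h ℓ (y - τ)) x (ee j))^2)
        = ∑' ℓ : ℤ × ℤ, ∑ j, (fderiv ℝ (χ h ℓ) (x - τ) (ee j))^2 := by
          refine tsum_congr fun ℓ => ?_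
          rw [hkey ℓ]
    _ ≤ D * h ^ (-(2*α)) := hχgrad h hh (x - τ)
  -- ENNReal-valued density and its integral
  set G' : E2 → ℝ≥0∞ := fun x => ENNReal.ofReal (‖φ x‖ ^ p) with hG'def
  have hG'meas : Measurable G' := hgmeas.ennreal_ofReal
  set I' : ℝ≥0∞ := ∫⁻ x in Ω, G' x with hI'def
  have hI' : ENNReal.ofReal I = I' :=
    ofReal_integral_eq_lintegral_ofReal hg_int
      (ae_of_all _ fun x => Real.rpow_nonneg (norm_nonneg _) p)
  have hI'fin : I' ≠ ⊤ := by
    rw [← hI']; exact ENNReal.ofReal_ne_top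
  -- upper bound from a good choice of τ
  have hup : ∀ τ : E2,
      (∫⁻ x in Ω, (Gdᶜ.indicator (fun _ => (1:ℝ≥0∞)) (x - τ)) * G' x) ≤ ENNReal.ofReal ε * I' →
      I ≤ (1 + 2*ε) * ∑' ℓ : ℤ × ℤ, ∫ x in Ω, F τ ℓ x := by
    intro τ hbad
    set S : ℝ := ∑' ℓ : ℤ × ℤ, ∫ x in Ω, F τ ℓ x with hSdef
    have hSnn : 0 ≤ S := tsum_nonneg fun ℓ => integral_nonneg fun x => hFnn τ ℓ x
    have hFsumpt : ∀ x : E2, Summable fun ℓ : ℤ × ℤ => F τ ℓ x := by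
      intro x
      have hfx : (fun ℓ : ℤ × ℤ => F τ ℓ x) = fun ℓ => (χ h ℓ (x - τ)) ^ p * ‖φ x‖ ^ p :=
        funext fun ℓ => hFeq τ ℓ x
      rw [hfx]
      exact (hsump (x - τ)).mul_right _
    have hpt : ∀ x : E2, G' x ≤ (∑' ℓ : ℤ × ℤ, ENNReal.ofReal (F τ ℓ x))
        + (Gdᶜ.indicator (fun _ => (1:ℝ≥0∞)) (x - τ)) * G' x := by
      intro x
      by_cases hx : x - τ ∈ Gd
      · refine le_add_right ?_
        have h1 : ‖φ x‖ ^ p ≤ ∑' ℓ : ℤ × ℤ, F τ ℓ x := by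
          have hge := hgood1 _ hx
          have hmul : (∑' ℓ : ℤ × ℤ, F τ ℓ x)
              = (∑' ℓ : ℤ × ℤ, (χ h ℓ (x - τ)) ^ p) * ‖φ x‖ ^ p := by
            rw [← tsum_mul_right]
            exact tsum_congr fun ℓ => hFeq τ ℓ x
          rw [hmul]
          have hnn : (0:ℝ) ≤ ‖φ x‖ ^ p := Real.rpow_nonneg (norm_nonneg _) p
          nlinarith
        calc G' x = ENNReal.ofReal (‖φ x‖ ^ p) := rfl
        _ ≤ ENNReal.ofReal (∑' ℓ : ℤ × ℤ, F τ ℓ x) := ENNReal.ofReal_le_ofReal h1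
        _ = ∑' ℓ : ℤ × ℤ, ENNReal.ofReal (F τ ℓ x) :=
              ENNReal.ofReal_tsum_of_nonneg (fun ℓ => hFnn τ ℓ x) (hFsumpt x)
      · have hmem : x - τ ∈ Gdᶜ := hx
        rw [Set.indicator_of_mem hmem, one_mul]
        exact self_le_add_left _ _
    have hameas : ∀ ℓ : ℤ × ℤ, Measurable fun x => ENNReal.ofReal (F τ ℓ x) :=
      fun ℓ => (hFmeas τ ℓ).ennreal_ofReal
    have hswapeq : (∫⁻ x in Ω, ∑' ℓ : ℤ × ℤ, ENNReal.ofReal (F τ ℓ x)) = ENNReal.ofReal S := by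
      rw [lintegral_tsum fun ℓ => (hameas ℓ).aemeasurable, hSdef,
        ENNReal.ofReal_tsum_of_nonneg (fun ℓ => integral_nonneg fun x => hFnn τ ℓ x) (hSsum τ)]
      exact tsum_congr fun ℓ =>
        (ofReal_integral_eq_lintegral_ofReal (hFint τ ℓ) (ae_of_all _ fun x => hFnn τ ℓ x)).symm
    have hchain : ENNReal.ofReal I ≤ ENNReal.ofReal S + ENNReal.ofReal ε * ENNReal.ofReal I := by
      rw [hI']
      calc I' ≤ ∫⁻ x in Ω, ((∑' ℓ : ℤ × ℤ, ENNReal.ofReal (F τ ℓ x))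
            + (Gdᶜ.indicator (fun _ => (1:ℝ≥0∞)) (x - τ)) * G' x) := lintegral_mono hpt
      _ = (∫⁻ x in Ω, ∑' ℓ : ℤ × ℤ, ENNReal.ofReal (F τ ℓ x))
            + ∫⁻ x in Ω, (Gdᶜ.indicator (fun _ => (1:ℝ≥0∞)) (x - τ)) * G' x :=
            lintegral_add_left (Measurable.ennreal_tsum hameas) _
      _ ≤ ENNReal.ofReal S + ENNReal.ofReal ε * I' := by
            rw [hswapeq]
            exact add_le_add le_rfl hbad
    have hIle : I ≤ S + ε * I := by
      rw [← ENNReal.ofReal_mul hεpos.le, ← ENNReal.ofReal_add hSnn (mul_nonneg hεpos.le hInn)]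
        at hchain
      exact (ENNReal.ofReal_le_ofReal_iff (by nlinarith)).1 hchain
    nlinarith [mul_nonneg hεpos.le hInn, mul_nonneg hεpos.le hSnn]
  -- choice of a good τ by averaging over the fundamental cell
  set Qset : Set E2 := {τ : E2 | τ 0 ∈ Set.Ico (0:ℝ) L ∧ τ 1 ∈ Set.Ico (0:ℝ) L} with hQdef
  have hQvol : volume Qset = ENNReal.ofReal L * ENNReal.ofReal L := by
    rw [hQdef, st18_vol_prod _ _ measurableSet_Ico measurableSet_Ico, Real.volume_Ico, sub_zero]
  have hτex : ∃ τ : E2,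
      (∫⁻ x in Ω, (Gdᶜ.indicator (fun _ => (1:ℝ≥0∞)) (x - τ)) * G' x) ≤ ENNReal.ofReal ε * I' := by
    rcases eq_or_ne I' 0 with hI0 | hI0
    · refine ⟨0, ?_⟩
      have hle : (∫⁻ x in Ω, (Gdᶜ.indicator (fun _ => (1:ℝ≥0∞)) (x - 0)) * G' x) ≤ I' := by
        rw [hI'def]
        refine lintegral_mono fun x => ?_
        have h1 : Gdᶜ.indicator (fun _ => (1:ℝ≥0∞)) (x - 0) ≤ 1 := by
          by_cases hy : x - 0 ∈ Gdᶜ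
          · rw [Set.indicator_of_mem hy]
          · rw [Set.indicator_of_notMem hy]
            exact zero_le
        calc Gdᶜ.indicator (fun _ => (1:ℝ≥0∞)) (x - 0) * G' x ≤ 1 * G' x :=
              mul_le_mul_left h1 _
        _ = G' x := one_mul _
      rw [hI0] at hle
      rw [hI0, mul_zero]
      exact hle
    · by_contra hc
      push_neg at hc
      have hc' : ∀ τ : E2, ENNReal.ofReal ε * I'
          ≤ ∫⁻ x in Ω, (Gdᶜ.indicator (fun _ => (1:ℝ≥0∞)) (x - τ)) * G' x :=
        fun τ => (hc τ).le
      -- integrate in τ over the cell Qset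
      have hmeas_unc : Measurable (Function.uncurry fun (τ : E2) (x : E2) =>
          (Gdᶜ.indicator (fun _ => (1:ℝ≥0∞)) (x - τ)) * G' x) := by
        refine Measurable.mul ?_ (hG'meas.comp measurable_snd)
        exact (measurable_const.indicator hGdmeas.compl).comp
          ((continuous_snd.sub continuous_fst).measurable)
      have hTbd : ∀ x : E2,
          (∫⁻ τ in Qset, Gdᶜ.indicator (fun _ => (1:ℝ≥0∞)) (x - τ))
            ≤ ENNReal.ofReal (2*(h^α*L)) := by
        intro x
        have hSm : MeasurableSet ((fun τ : E2 => x - τ) ⁻¹' Gdᶜ) :=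
          ((continuous_const.sub continuous_id).measurable) hGdmeas.compl
        have hrw : (fun τ : E2 => Gdᶜ.indicator (fun _ => (1:ℝ≥0∞)) (x - τ))
            = ((fun τ : E2 => x - τ) ⁻¹' Gdᶜ).indicator (fun _ => (1:ℝ≥0∞)) := by
          funext τ
          exact (Set.indicator_comp_right (g := fun _ => (1:ℝ≥0∞)) (fun τ : E2 => x - τ)).symm
        rw [hrw]
        have h1 : (∫⁻ τ in Qset, ((fun τ : E2 => x - τ) ⁻¹' Gdᶜ).indicator (fun _ => (1:ℝ≥0∞)) τ)
            = volume (((fun τ : E2 => x - τ) ⁻¹' Gdᶜ) ∩ Qset) := by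
          rw [show ((fun _ : E2 => (1:ℝ≥0∞))) = (1 : E2 → ℝ≥0∞) from rfl,
            lintegral_indicator_one hSm, Measure.restrict_apply hSm]
        rw [h1]
        -- split the bad set along the two coordinates
        set A1 : Set ℝ := Set.Ico (0:ℝ) L ∩ {t : ℝ | ¬ ∃ n : ℤ, |x 0 - t - L*n| ≤ s} with hA1
        set A2 : Set ℝ := Set.Ico (0:ℝ) L ∩ {t : ℝ | ¬ ∃ n : ℤ, |x 1 - t - L*n| ≤ s} with hA2
        have hA1m : MeasurableSet A1 :=
          measurableSet_Ico.inter (st18_oneD_measG L s (x 0)).compl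
        have hA2m : MeasurableSet A2 :=
          measurableSet_Ico.inter (st18_oneD_measG L s (x 1)).compl
        have hsub : ((fun τ : E2 => x - τ) ⁻¹' Gdᶜ) ∩ Qset ⊆
            {τ : E2 | τ 0 ∈ A1 ∧ τ 1 ∈ Set.Ico (0:ℝ) L}
              ∪ {τ : E2 | τ 0 ∈ Set.Ico (0:ℝ) L ∧ τ 1 ∈ A2} := by
          rintro τ ⟨hτS, hτQ⟩
          have hxτ0 : (x - τ) 0 = x 0 - τ 0 := by simp
          have hxτ1 : (x - τ) 1 = x 1 - τ 1 := by simp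
          have hnot : ¬ ((∃ n : ℤ, |(x - τ) 0 - L*(n:ℝ)| ≤ s)
              ∧ (∃ n : ℤ, |(x - τ) 1 - L*(n:ℝ)| ≤ s)) := by
            intro hcon
            exact hτS ((hGdiff _).2 hcon)
          rw [not_and_or] at hnot
          rcases hnot with hbad1 | hbad1
          · left
            refine ⟨⟨hτQ.1, fun hex => hbad1 ?_⟩, hτQ.2⟩
            obtain ⟨n, hn⟩ := hex
            refine ⟨n, ?_⟩
            rw [hxτ0]
            exact hn
          · right
            refine ⟨hτQ.1, ⟨hτQ.2, fun hex => hbad1 ?_⟩⟩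
            obtain ⟨n, hn⟩ := hex
            refine ⟨n, ?_⟩
            rw [hxτ1]
            exact hn
        have hLa : L - 2*s = h^α := by rw [hLs]; ring
        have hbad1' : volume A1 ≤ ENNReal.ofReal (h^α) := by
          rw [← hLa]
          exact st18_oneD_bad L s (x 0) hspos h2sL
        have hbad2' : volume A2 ≤ ENNReal.ofReal (h^α) := by
          rw [← hLa]
          exact st18_oneD_bad L s (x 1) hspos h2sL
        have hv1 : volume {τ : E2 | τ 0 ∈ A1 ∧ τ 1 ∈ Set.Ico (0:ℝ) L}
            ≤ ENNReal.ofReal (h^α * L) := by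
          calc volume {τ : E2 | τ 0 ∈ A1 ∧ τ 1 ∈ Set.Ico (0:ℝ) L}
              = volume A1 * volume (Set.Ico (0:ℝ) L) :=
                st18_vol_prod _ _ hA1m measurableSet_Ico
          _ ≤ ENNReal.ofReal (h^α) * ENNReal.ofReal L :=
                mul_le_mul' hbad1' (le_of_eq (by rw [Real.volume_Ico, sub_zero]))
          _ = ENNReal.ofReal (h^α * L) := (ENNReal.ofReal_mul (by positivity)).symm
        have hv2 : volume {τ : E2 | τ 0 ∈ Set.Ico (0:ℝ) L ∧ τ 1 ∈ A2}
            ≤ ENNReal.ofReal (h^α * L) := by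
          calc volume {τ : E2 | τ 0 ∈ Set.Ico (0:ℝ) L ∧ τ 1 ∈ A2}
              = volume (Set.Ico (0:ℝ) L) * volume A2 :=
                st18_vol_prod _ _ measurableSet_Ico hA2m
          _ = volume A2 * volume (Set.Ico (0:ℝ) L) := mul_comm _ _
          _ ≤ ENNReal.ofReal (h^α) * ENNReal.ofReal L :=
                mul_le_mul' hbad2' (le_of_eq (by rw [Real.volume_Ico, sub_zero]))
          _ = ENNReal.ofReal (h^α * L) := (ENNReal.ofReal_mul (by positivity)).symm
        calc volume (((fun τ : E2 => x - τ) ⁻¹' Gdᶜ) ∩ Qset)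
            ≤ volume ({τ : E2 | τ 0 ∈ A1 ∧ τ 1 ∈ Set.Ico (0:ℝ) L}
              ∪ {τ : E2 | τ 0 ∈ Set.Ico (0:ℝ) L ∧ τ 1 ∈ A2}) := measure_mono hsub
        _ ≤ volume {τ : E2 | τ 0 ∈ A1 ∧ τ 1 ∈ Set.Ico (0:ℝ) L}
              + volume {τ : E2 | τ 0 ∈ Set.Ico (0:ℝ) L ∧ τ 1 ∈ A2} := measure_union_le _ _
        _ ≤ ENNReal.ofReal (h^α * L) + ENNReal.ofReal (h^α * L) := add_le_add hv1 hv2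
        _ = ENNReal.ofReal (2*(h^α*L)) := by
              rw [← ENNReal.ofReal_add (by positivity) (by positivity)]
              congr 1
              ring
      have hTon : (∫⁻ τ in Qset, ∫⁻ x in Ω,
          (Gdᶜ.indicator (fun _ => (1:ℝ≥0∞)) (x - τ)) * G' x)
          ≤ ENNReal.ofReal (2*(h^α*L)) * I' := by
        rw [lintegral_lintegral_swap hmeas_unc.aemeasurable]
        calc (∫⁻ x in Ω, ∫⁻ τ in Qset, (Gdᶜ.indicator (fun _ => (1:ℝ≥0∞)) (x - τ)) * G' x)
            = ∫⁻ x in Ω, (∫⁻ τ in Qset, Gdᶜ.indicator (fun _ => (1:ℝ≥0∞)) (x - τ)) * G' x := by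
              refine lintegral_congr fun x => ?_
              exact lintegral_mul_const _ ((measurable_const.indicator hGdmeas.compl).comp
                (continuous_const.sub continuous_id).measurable)
        _ ≤ ∫⁻ x in Ω, ENNReal.ofReal (2*(h^α*L)) * G' x := by
              refine lintegral_mono fun x => ?_
              exact mul_le_mul_left (hTbd x) _
        _ = ENNReal.ofReal (2*(h^α*L)) * I' := by
              rw [hI'def]
              exact lintegral_const_mul _ hG'meas
      have hlow : ENNReal.ofReal ε * I' * volume Qset
          ≤ ∫⁻ τ in Qset, ∫⁻ x in Ω,
            (Gdᶜ.indicator (fun _ => (1:ℝ≥0∞)) (x - τ)) * G' x := by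
        rw [← setLIntegral_const Qset (ENNReal.ofReal ε * I')]
        exact lintegral_mono fun τ => hc' τ
      have hcomb : ENNReal.ofReal (ε * (L*L)) * I' ≤ ENNReal.ofReal (2*(h^α*L)) * I' := by
        calc ENNReal.ofReal (ε * (L*L)) * I'
            = ENNReal.ofReal ε * I' * volume Qset := by
              rw [hQvol, ENNReal.ofReal_mul hεpos.le, ENNReal.ofReal_mul (by positivity)]
              ring
        _ ≤ _ := le_trans hlow hTon
      have hreal : ε * (L*L) ≤ 2*(h^α*L) :=
        (ENNReal.ofReal_le_ofReal_iff (by positivity)).1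
          ((ENNReal.mul_le_mul_iff_left hI0 hI'fin).1 hcomb)
      have hεL : ε * L = 2*(h^α) + ε * h^α := by
        have : ε * L = 2*(ε*s) + ε * h^α := by rw [hLs]; ring
        rw [hεs] at this
        exact this
      nlinarith [mul_pos hεpos hapos, mul_pos (mul_pos hεpos hapos) hLpos]
  -- conclusion
  obtain ⟨τ, hτ⟩ := hτex
  have htermcongr : ∀ ℓ : ℤ × ℤ,
      (∫ x in Ω, (χ h ℓ (x - τ) * ‖ψ x‖) ^ p) = ∫ x in Ω, F τ ℓ x := by
    intro ℓ
    apply integral_congr_ae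
    filter_upwards [hφae] with x hx
    simp only [hFdef]
    rw [hx]
  have htsum : (∑' ℓ : ℤ × ℤ, ∫ x in Ω, (χ h ℓ (x - τ) * ‖ψ x‖) ^ p)
      = ∑' ℓ : ℤ × ℤ, ∫ x in Ω, F τ ℓ x := tsum_congr htermcongr
  refine ⟨τ, ?_, ?_, hgrad τ⟩
  · rw [htsum, hIcongr]
    exact hSleI τ
  · rw [htsum, hIcongr]
    exact hup τ hτ
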